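/- Let P be a symmetric stochastic matrix with eigenvalues 1 = λ₁ > λ₂ ≥ … ≥ λₙ ≥ −1, and suppose its Cheeger constant χ(P) = min over proper nonempty subsets S of (Σ_{i∈S,j∉S} P_{ij}) / min(|S|, |S̄|) satisfies χ(P) ≥ α > 0. Then λ₂ ≤ 1 − α²/2. -/

import Mathlib

/-!
Choose the sign of the eigenvector `v ⊥ 𝟙` so that its positive part `u` is supported on at most
half of the vertices. The eigenvalue equation bounds the Dirichlet form:
`∑ P i j (u i - u j)² ≤ 2 (1 - μ) ‖u‖²`. Every level set of `u²` has at most `n / 2` elements, so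
the Cheeger bound applies to each of them, and summing over the layers (co-area) gives
`2 α ‖u‖² ≤ ∑ P i j |u i² - u j²|`. Cauchy–Schwarz, together with `∑ P i j (u i + u j)² ≤ 4 ‖u‖²`,
turns this into `4 α² ‖u‖⁴ ≤ 8 (1 - μ) ‖u‖⁴`.
-/

open Finset Matrix

section Layer

variable {ι : Type*} [DecidableEq ι]

theorem abs_add_ite_sub_add_ite {S : Finset ι} {g : ι → ℝ} (hg : ∀ i, 0 ≤ g i)
    (hgS : ∀ i ∉ S, g i = 0) {c : ℝ} (hc : 0 ≤ c) (i j : ι) :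
    |(g i + if i ∈ S then c else 0) - (g j + if j ∈ S then c else 0)| =
      c * |(if i ∈ S then 1 else 0) - (if j ∈ S then 1 else 0)| + |g i - g j| := by
  by_cases hi : i ∈ S <;> by_cases hj : j ∈ S
  · simp [hi, hj]
  · simp only [hi, hj, if_true, if_false, hgS j hj, sub_zero, add_zero, abs_one, mul_one]
    rw [abs_of_nonneg (by linarith [hg i]), abs_of_nonneg (hg i)]
    ring
  · simp only [hi, hj, if_true, if_false, hgS i hi, zero_sub, zero_add, abs_neg, abs_one,
      mul_one]
    rw [abs_of_nonneg (by linarith [hg j]), abs_of_nonneg (hg j)]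
    ring
  · simp [hi, hj]

end Layer

section Quadratic

variable {ι : Type*} [Fintype ι] {P : Matrix ι ι ℝ}

theorem sum_sum_mul_sq_add_sq (hrow : ∀ i, ∑ j, P i j = 1) (hcol : ∀ j, ∑ i, P i j = 1)
    (x : ι → ℝ) : ∑ i, ∑ j, P i j * (x i ^ 2 + x j ^ 2) = 2 * ∑ i, x i ^ 2 := by
  simp only [mul_add, sum_add_distrib]
  rw [sum_comm (f := fun i j => P i j * x j ^ 2)]
  simp only [← sum_mul, hrow, hcol, one_mul]
  ring

theorem sum_sum_mul_sub_sq (hrow : ∀ i, ∑ j, P i j = 1) (hcol : ∀ j, ∑ i, P i j = 1)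
    (x : ι → ℝ) :
    ∑ i, ∑ j, P i j * (x i - x j) ^ 2 = 2 * (∑ i, x i ^ 2 - ∑ i, ∑ j, P i j * (x i * x j)) := by
  rw [mul_sub, ← sum_sum_mul_sq_add_sq hrow hcol, mul_sum, ← sum_sub_distrib]
  simp only [mul_sum, ← sum_sub_distrib]
  congr! 2 with i - j -
  ring

theorem sum_sum_mul_add_sq_add_sum_sum_mul_sub_sq (hrow : ∀ i, ∑ j, P i j = 1)
    (hcol : ∀ j, ∑ i, P i j = 1) (x : ι → ℝ) :
    ∑ i, ∑ j, P i j * (x i + x j) ^ 2 + ∑ i, ∑ j, P i j * (x i - x j) ^ 2 =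
      4 * ∑ i, x i ^ 2 := by
  simp only [← sum_add_distrib, ← mul_add]
  rw [show (4 : ℝ) = 2 * 2 by norm_num, mul_assoc, ← sum_sum_mul_sq_add_sq hrow hcol, mul_sum]
  simp only [mul_sum]
  congr! 2 with i - j -
  ring

theorem sq_sum_sum_mul_abs_sq_sub_sq_le (hnonneg : ∀ i j, 0 ≤ P i j) (x : ι → ℝ) :
    (∑ i, ∑ j, P i j * |x i ^ 2 - x j ^ 2|) ^ 2 ≤
      (∑ i, ∑ j, P i j * (x i - x j) ^ 2) * ∑ i, ∑ j, P i j * (x i + x j) ^ 2 := by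
  simp only [← Fintype.sum_prod_type']
  refine sum_sq_le_sum_mul_sum_of_sq_le_mul _ (fun p _ => by have := hnonneg p.1 p.2; positivity)
    (fun p _ => by have := hnonneg p.1 p.2; positivity) fun p _ => le_of_eq ?_
  rw [mul_pow, sq_abs]
  ring

theorem mul_sum_sq_max_zero_le (hnonneg : ∀ i j, 0 ≤ P i j) {μ : ℝ} {v : ι → ℝ}
    (hv : P *ᵥ v = μ • v) :
    μ * ∑ i, max (v i) 0 ^ 2 ≤ ∑ i, ∑ j, P i j * (max (v i) 0 * max (v j) 0) := by
  rw [mul_sum]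
  refine sum_le_sum fun i _ => ?_
  rcases le_or_gt (v i) 0 with hi | hi
  · simp [max_eq_right hi]
  have hPv : μ * v i ≤ ∑ j, P i j * max (v j) 0 := by
    have hvi := congrFun hv i
    simp only [mulVec, dotProduct, Pi.smul_apply, smul_eq_mul] at hvi
    rw [← hvi]
    exact sum_le_sum fun j _ => mul_le_mul_of_nonneg_left (le_max_left _ _) (hnonneg i j)
  simp only [max_eq_left hi.le]
  calc μ * v i ^ 2 = v i * (μ * v i) := by ring
    _ ≤ v i * ∑ j, P i j * max (v j) 0 := by gcongr
    _ = ∑ j, P i j * (v i * max (v j) 0) := by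
      rw [mul_sum]
      exact sum_congr rfl fun j _ => by ring

end Quadratic

section Cut

variable {ι : Type*} [Fintype ι] [DecidableEq ι] {P : Matrix ι ι ℝ}

def Matrix.cut (P : Matrix ι ι ℝ) (S : Finset ι) : ℝ := ∑ i ∈ S, ∑ j ∈ Sᶜ, P i j

theorem sum_sum_mul_abs_ite_sub_ite (hsymm : ∀ i j, P i j = P j i) (S : Finset ι) :
    ∑ i, ∑ j, P i j * |(if i ∈ S then 1 else 0) - (if j ∈ S then 1 else 0)| = 2 * P.cut S := by
  have hsplit : ∀ i j, P i j * |(if i ∈ S then 1 else 0) - (if j ∈ S then 1 else 0)| =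
      (if i ∈ S then if j ∈ Sᶜ then P i j else 0 else 0) +
        (if j ∈ S then if i ∈ Sᶜ then P j i else 0 else 0) := by
    intro i j
    by_cases hi : i ∈ S <;> by_cases hj : j ∈ S <;> simp [hi, hj, hsymm i j]
  simp only [hsplit, sum_add_distrib]
  rw [sum_comm (f := fun i j => if j ∈ S then if i ∈ Sᶜ then P j i else 0 else 0)]
  simp only [sum_ite_irrel, sum_const_zero, sum_ite_mem, univ_inter, cut]
  ring

theorem two_mul_mul_sum_le_sum_sum_mul_abs_sub (hsymm : ∀ i j, P i j = P j i) {α : ℝ}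
    {W : Finset ι} (hW : ∀ S ⊆ W, α * #S ≤ P.cut S) {f : ι → ℝ} (hf : ∀ i, 0 ≤ f i)
    (hfW : ∀ i ∉ W, f i = 0) :
    2 * α * ∑ i, f i ≤ ∑ i, ∑ j, P i j * |f i - f j| := by
  induction W using Finset.strongInduction generalizing f with
  | H W ih =>
  rcases W.eq_empty_or_nonempty with rfl | hW₀
  · simp [hfW]
  -- peel off the bottom layer `c • 𝟙_W`, where `c` is the least value of `f` on `W`
  obtain ⟨i₀, hi₀, hc⟩ := W.exists_mem_eq_inf' hW₀ f
  set c := W.inf' hW₀ f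
  have hc₀ : 0 ≤ c := hc ▸ hf i₀
  have hcf : ∀ i ∈ W, c ≤ f i := fun i hi => inf'_le f hi
  set g : ι → ℝ := fun i => f i - if i ∈ W then c else 0
  have hfg : ∀ i, f i = g i + if i ∈ W then c else 0 := fun i => by simp [g]
  have hg : ∀ i, 0 ≤ g i := fun i => by
    by_cases hi : i ∈ W <;> simp [g, hi, hcf, hf i]
  set W' := W.filter (c < f ·)
  have hW' : W' ⊂ W := (ssubset_iff_of_subset (filter_subset _ _)).mpr ⟨i₀, hi₀, by simp [hc]⟩
  have hgW' : ∀ i ∉ W', g i = 0 := fun i hi => by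
    by_cases hiW : i ∈ W
    · have : f i = c := le_antisymm (not_lt.mp fun h => hi (mem_filter.mpr ⟨hiW, h⟩)) (hcf i hiW)
      simp [g, hiW, this]
    · simp [g, hiW, hfW i hiW]
  have hgW : ∀ i ∉ W, g i = 0 := fun i hi => hgW' i fun h => hi (hW'.subset h)
  have hg_le := ih W' hW' (fun S hS => hW S (hS.trans hW'.subset)) hg hgW'
  have hf_sum : ∑ i, f i = c * #W + ∑ i, g i := by
    simp only [hfg, sum_add_distrib, sum_ite_mem, univ_inter, sum_const, nsmul_eq_mul]
    ring
  calc 2 * α * ∑ i, f i = c * (2 * (α * #W)) + 2 * α * ∑ i, g i := by rw [hf_sum]; ring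
    _ ≤ c * (2 * P.cut W) + ∑ i, ∑ j, P i j * |g i - g j| := by
      gcongr
      exact hW W subset_rfl
    _ = ∑ i, ∑ j, P i j * |f i - f j| := by
      simp only [hfg, abs_add_ite_sub_add_ite hg hgW hc₀, ← sum_sum_mul_abs_ite_sub_ite hsymm W,
        mul_add, sum_add_distrib, mul_sum, mul_left_comm c]

theorem mul_card_le_cut_of_le_div_min {α : ℝ}
    (hcheeger : ∀ S : Finset ι, S.Nonempty → S ≠ univ → α ≤ P.cut S / (min #S #Sᶜ : ℝ))
    {S : Finset ι} (hS : 2 * #S ≤ Fintype.card ι) : α * #S ≤ P.cut S := by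
  rcases S.eq_empty_or_nonempty with rfl | hne
  · simp [cut]
  have hcompl : #S ≤ #Sᶜ := by rw [card_compl]; omega
  have hne' : S ≠ univ := fun h => by
    have := hne.card_pos
    rw [h, card_univ] at this hS
    omega
  have := hcheeger S hne hne'
  rwa [min_eq_left (by exact_mod_cast hcompl), le_div_iff₀ (by simpa using hne.card_pos)] at this

theorem le_one_sub_sq_div_two_of_mulVec_eq_smul (hsymm : ∀ i j, P i j = P j i)
    (hnonneg : ∀ i j, 0 ≤ P i j) (hrow : ∀ i, ∑ j, P i j = 1) {α : ℝ} (hα : 0 ≤ α)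
    {W : Finset ι} (hW : ∀ S ⊆ W, α * #S ≤ P.cut S) {μ : ℝ} {v : ι → ℝ}
    (hv : P *ᵥ v = μ • v) (hpos : ∃ i, 0 < v i) (hvW : ∀ i ∉ W, v i ≤ 0) :
    μ ≤ 1 - α ^ 2 / 2 := by
  have hcol : ∀ j, ∑ i, P i j = 1 := fun j => by simpa only [hsymm _ j] using hrow j
  set u : ι → ℝ := fun i => max (v i) 0
  set s := ∑ i, u i ^ 2
  have hs : 0 < s := by
    obtain ⟨i, hi⟩ := hpos
    exact sum_pos' (fun j _ => sq_nonneg _) ⟨i, mem_univ i, by simp [u, hi]⟩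
  set D := ∑ i, ∑ j, P i j * (u i - u j) ^ 2
  set B := ∑ i, ∑ j, P i j * (u i + u j) ^ 2
  have hD₀ : 0 ≤ D := sum_nonneg fun i _ => sum_nonneg fun j _ => by
    have := hnonneg i j; positivity
  have hD : D ≤ 2 * (1 - μ) * s := by
    have hquad : μ * s ≤ ∑ i, ∑ j, P i j * (u i * u j) := mul_sum_sq_max_zero_le hnonneg hv
    linarith [sum_sum_mul_sub_sq hrow hcol u]
  have hB : B ≤ 4 * s := by linarith [sum_sum_mul_add_sq_add_sum_sum_mul_sub_sq hrow hcol u]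
  have hcoarea : 2 * α * s ≤ ∑ i, ∑ j, P i j * |u i ^ 2 - u j ^ 2| :=
    two_mul_mul_sum_le_sum_sum_mul_abs_sub hsymm hW (fun i => sq_nonneg _)
      fun i hi => by simp [u, max_eq_right (hvW i hi)]
  have : 4 * α ^ 2 * s ^ 2 ≤ 8 * (1 - μ) * s ^ 2 :=
    calc 4 * α ^ 2 * s ^ 2 = (2 * α * s) ^ 2 := by ring
      _ ≤ (∑ i, ∑ j, P i j * |u i ^ 2 - u j ^ 2|) ^ 2 := by gcongr
      _ ≤ D * B := sq_sum_sum_mul_abs_sq_sub_sq_le hnonneg u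
      _ ≤ D * (4 * s) := by gcongr
      _ ≤ 2 * (1 - μ) * s * (4 * s) := by gcongr
      _ = 8 * (1 - μ) * s ^ 2 := by ring
  linarith [le_of_mul_le_mul_right this (by positivity)]

end Cut

/-- Cheeger bound on the second eigenvalue: any eigenvalue of `P` whose eigenvector is
orthogonal to the all-ones vector (i.e. any non-principal eigenvalue) is at most
`1 - α²/2`. -/
theorem stmt_3 (n : ℕ) (P : Matrix (Fin n) (Fin n) ℝ)
    (hsymm : ∀ i j, P i j = P j i)
    (hnonneg : ∀ i j, 0 ≤ P i j)
    (hstoch : ∀ i, ∑ j, P i j = 1)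
    (α : ℝ) (hα : 0 < α)
    (hcheeger : ∀ S : Finset (Fin n), S.Nonempty → S ≠ Finset.univ →
      α ≤ (∑ i ∈ S, ∑ j ∈ Sᶜ, P i j) / (min S.card Sᶜ.card : ℝ)) :
    ∀ (μ : ℝ) (v : Fin n → ℝ), v ≠ 0 → P.mulVec v = μ • v → (∑ i, v i) = 0 →
      μ ≤ 1 - α ^ 2 / 2 := by
  intro μ v hv heig hsum
  have hcut {S : Finset (Fin n)} (hS : 2 * #S ≤ n) : α * #S ≤ P.cut S := by
    simpa using mul_card_le_cut_of_le_div_min hcheeger (S := S) (by simpa using hS)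
  have hpos {w : Fin n → ℝ} (hw : w ≠ 0) (hsum : ∑ i, w i = 0) : ∃ i, 0 < w i := by
    obtain ⟨i, -, hi⟩ := exists_pos_of_sum_zero_of_exists_nonzero w hsum
      (by simpa [funext_iff] using hw)
    exact ⟨i, hi⟩
  have hcard : #{i | 0 < v i} + #{i | 0 < (-v) i} ≤ n :=
    calc #{i | 0 < v i} + #{i | 0 < (-v) i} ≤ #{i | 0 < v i} + #{i | ¬ 0 < v i} := by
          gcongr with i
          simpa using le_of_lt
      _ = n := by rw [card_filter_add_card_filter_not, card_univ, Fintype.card_fin]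
  rcases le_or_gt (2 * #{i | 0 < v i}) n with h | h
  · exact le_one_sub_sq_div_two_of_mulVec_eq_smul hsymm hnonneg hstoch hα.le
      (fun S hS => hcut (by have := card_le_card hS; omega)) heig (hpos hv hsum)
      (W := {i | 0 < v i}) fun i hi => by simpa using hi
  · exact le_one_sub_sq_div_two_of_mulVec_eq_smul hsymm hnonneg hstoch hα.le
      (fun S hS => hcut (by have := card_le_card hS; omega))
      (by rw [mulVec_neg, heig, smul_neg]) (hpos (neg_ne_zero.mpr hv) (by simp [hsum]))
      (W := {i | 0 < (-v) i}) fun i hi => by simpa using hi
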